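/- Let f : M₁ → M₂ be a homotopy equivalence of topological spaces. Then: (a) the projection f*LM₂ → LM₂, (x, γ) ↦ γ, is a homotopy equivalence; and (b) the map f̃ : LM₁ → f*LM₂ defined by f̃(γ) = (γ(1), f ∘ γ) is a homotopy equivalence, where 1 denotes the basepoint of S¹. In particular Lf = (projection) ∘ f̃. -/

import Mathlib

/-- A continuous map is a homotopy equivalence if it admits a continuous
homotopy inverse. -/
def IsHomotopyEquiv {X Y : Type*} [TopologicalSpace X] [TopologicalSpace Y]
    (f : C(X, Y)) : Prop :=
  ∃ g : C(Y, X),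
    (g.comp f).Homotopic (ContinuousMap.id X) ∧
    (f.comp g).Homotopic (ContinuousMap.id Y)

/-- The induced map `Lf : LM₁ → LM₂`, `γ ↦ f ∘ γ`, on free loop spaces
`LM = C(S¹, M)` (compact-open topology). -/
noncomputable def loopMap {M₁ M₂ : Type*} [TopologicalSpace M₁] [TopologicalSpace M₂]
    (f : C(M₁, M₂)) : C(C(Circle, M₁), C(Circle, M₂)) :=
  ⟨fun γ => f.comp γ, ContinuousMap.continuous_postcomp f⟩

/-- The projection `f*LM₂ → LM₂`, `(x, γ) ↦ γ`, from the pullback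
`f*LM₂ = {(x, γ) ∈ M₁ × LM₂ : f x = γ 1}` (subspace of the product). -/
def pullbackProj {M₁ M₂ : Type*} [TopologicalSpace M₁] [TopologicalSpace M₂]
    (f : C(M₁, M₂)) :
    C({q : M₁ × C(Circle, M₂) // f q.1 = q.2 1}, C(Circle, M₂)) :=
  ⟨fun q => q.val.2, (continuous_snd.comp continuous_subtype_val)⟩

/-- The map `f̃ : LM₁ → f*LM₂`, `γ ↦ (γ 1, f ∘ γ)`, where `1` is the basepoint
of the circle. -/
noncomputable def loopPullbackMap {M₁ M₂ : Type*} [TopologicalSpace M₁] [TopologicalSpace M₂]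
    (f : C(M₁, M₂)) :
    C(C(Circle, M₁), {q : M₁ × C(Circle, M₂) // f q.1 = q.2 1}) :=
  ⟨fun γ => ⟨(γ 1, f.comp γ), rfl⟩,
    Continuous.subtype_mk
      (((continuous_eval_const (1 : Circle)).prodMk
        (ContinuousMap.continuous_postcomp f))) _⟩

/-!
Evaluation `LM → M` admits a lifting function: a loop `γ` and a path `α` ending at `γ 1` give the
loop based at `α 0` that runs along `α`, around `γ` and back along `α`. The theorem then holds for
any `p : E → B` with a lifting function. If `a ≃ id_A`, the map `(h ∘ a)*E → h*E`,
`(x, e) ↦ (a x, e)`, is a homotopy equivalence whose inverse transports `e` back along the track of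
`x` under the homotopy `H`; the harder of the two homotopies to the identity lives in the square
`(u, v) ↦ H (u, H (v, x))`. For a homotopy inverse `g` of `f`, the maps
`(fgf)*E → (fg)*E → f*E → E ≅ id*E` have composites of this form, so two-out-of-six makes
`f*E → E` a homotopy equivalence, and (b) follows from `Lf = proj ∘ f̃` by two-out-of-three.
-/

open ContinuousMap unitInterval

local notation "clamp" => Set.projIcc (0 : ℝ) 1 zero_le_one

namespace IsHomotopyEquiv

variable {X Y Z W : Type*} [TopologicalSpace X] [TopologicalSpace Y] [TopologicalSpace Z]
  [TopologicalSpace W]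

theorem of_homotopic_inverses {f : C(X, Y)} {l r : C(Y, X)}
    (hl : (l.comp f).Homotopic (.id X)) (hr : (f.comp r).Homotopic (.id Y)) :
    IsHomotopyEquiv f := by
  refine ⟨l, hl, ?_⟩
  have h₁ : (f.comp l).Homotopic (f.comp ((l.comp f).comp r)) := by
    simpa [comp_assoc] using (Homotopic.refl (f.comp l)).comp hr.symm
  have h₂ : (f.comp ((l.comp f).comp r)).Homotopic (f.comp r) := by
    simpa using (Homotopic.refl f).comp (hl.comp (.refl r))
  exact h₁.trans (h₂.trans hr)

theorem _root_.Homeomorph.isHomotopyEquiv (e : X ≃ₜ Y) : IsHomotopyEquiv (e : C(X, Y)) :=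
  ⟨e.symm, by simp [Homotopic.refl], by simp [Homotopic.refl]⟩

theorem comp {g : C(Y, Z)} {f : C(X, Y)} (hg : IsHomotopyEquiv g) (hf : IsHomotopyEquiv f) :
    IsHomotopyEquiv (g.comp f) := by
  obtain ⟨g', hg'g, hgg'⟩ := hg
  obtain ⟨f', hf'f, hff'⟩ := hf
  refine ⟨f'.comp g', ?_, ?_⟩
  · have := (Homotopic.refl f').comp (hg'g.comp (.refl f))
    simp only [comp_assoc, id_comp] at this ⊢
    exact this.trans hf'f
  · have := (Homotopic.refl g).comp (hff'.comp (.refl g'))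
    simp only [comp_assoc, id_comp] at this ⊢
    exact this.trans hgg'

theorem of_comp_of_comp {u : C(X, Y)} {v : C(Y, Z)} {w : C(Z, W)}
    (hvu : IsHomotopyEquiv (v.comp u)) (hwv : IsHomotopyEquiv (w.comp v)) :
    IsHomotopyEquiv v := by
  obtain ⟨k₁, -, hk₁⟩ := hvu
  obtain ⟨k₂, hk₂, -⟩ := hwv
  exact of_homotopic_inverses (l := k₂.comp w) (r := u.comp k₁)
    (by simpa only [comp_assoc] using hk₂) (by simpa only [comp_assoc] using hk₁)

theorem of_comp_right {v : C(Y, Z)} {w : C(Z, W)} (hv : IsHomotopyEquiv v)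
    (hwv : IsHomotopyEquiv (w.comp v)) : IsHomotopyEquiv w := by
  obtain ⟨v', -, hvv'⟩ := hv
  obtain ⟨k, hkwv, hwvk⟩ := hwv
  refine of_homotopic_inverses (l := v.comp k) (r := v.comp k) ?_ (by rwa [← comp_assoc])
  have h₁ : ((v.comp k).comp w).Homotopic (((v.comp k).comp w).comp (v.comp v')) := by
    simpa using (Homotopic.refl ((v.comp k).comp w)).comp hvv'.symm
  have h₂ : (((v.comp k).comp w).comp (v.comp v')).Homotopic (v.comp v') := by
    simpa only [comp_assoc, id_comp] using (Homotopic.refl v).comp (hkwv.comp (.refl v'))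
  exact h₁.trans (h₂.trans hvv')

theorem of_comp_left {v : C(Y, Z)} {w : C(Z, W)} (hw : IsHomotopyEquiv w)
    (hwv : IsHomotopyEquiv (w.comp v)) : IsHomotopyEquiv v := by
  obtain ⟨w', hw'w, -⟩ := hw
  obtain ⟨k, hkwv, hwvk⟩ := hwv
  refine of_homotopic_inverses (l := k.comp w) (r := k.comp w) (by rwa [comp_assoc]) ?_
  have h₁ : (v.comp (k.comp w)).Homotopic ((w'.comp w).comp (v.comp (k.comp w))) := by
    simpa using hw'w.symm.comp (.refl (v.comp (k.comp w)))
  have h₂ : ((w'.comp w).comp (v.comp (k.comp w))).Homotopic (w'.comp w) := by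
    simpa only [comp_assoc, id_comp] using (Homotopic.refl w').comp (hwvk.comp (.refl w))
  exact h₁.trans (h₂.trans hw'w)

end IsHomotopyEquiv

section LoopMap

variable {X Y : Type*} [TopologicalSpace X] [TopologicalSpace Y]

theorem ContinuousMap.Homotopic.loopMap {f₀ f₁ : C(X, Y)} (h : f₀.Homotopic f₁) :
    (loopMap f₀).Homotopic (loopMap f₁) := by
  obtain ⟨F⟩ := h
  let G : C((I × C(Circle, X)) × Circle, Y) := ⟨fun q => F (q.1.1, q.1.2 q.2), by fun_prop⟩
  exact ⟨⟨G.curry, fun γ => by ext; simp [G, _root_.loopMap],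
    fun γ => by ext; simp [G, _root_.loopMap]⟩⟩

theorem IsHomotopyEquiv.loopMap {f : C(X, Y)} (hf : IsHomotopyEquiv f) :
    IsHomotopyEquiv (loopMap f) := by
  obtain ⟨g, hgf, hfg⟩ := hf
  exact ⟨_root_.loopMap g, hgf.loopMap, hfg.loopMap⟩

end LoopMap

namespace ContinuousMap.Homotopy

variable {A : Type*} [TopologicalSpace A] {a : C(A, A)} (H : a.Homotopy (.id A))

/-- The track of `y` under `H` from time `s`, run at double speed and then resting at `y`. -/
noncomputable def tracePath : C(I × A, C(I, A)) :=
  ContinuousMap.curry ⟨fun q => H (clamp (q.1.1 + 2 * q.2), q.1.2), by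
    have := continuous_projIcc (a := (0 : ℝ)) (b := 1) (h := zero_le_one); fun_prop⟩

@[simp] theorem tracePath_apply_zero (s : I) (y : A) : H.tracePath (s, y) 0 = H (s, y) := by
  simp [tracePath]

@[simp] theorem tracePath_apply_one (s : I) (y : A) : H.tracePath (s, y) 1 = y := by
  simp [tracePath, projIcc_eq_one.2 (by linarith [s.2.1] : (1 : ℝ) ≤ s + 2)]

theorem tracePath_one (y : A) : H.tracePath (1, y) = .const I y := by
  ext τ
  simp [tracePath, projIcc_eq_one.2 (by linarith [τ.2.1] : (1 : ℝ) ≤ 1 + 2 * τ)]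

/-- A homotopy from `H.tracePath (0, a x)` to the constant path at `a x` through paths from
`a (H (2s, x))` to `a x`. It lives in the square `(u, v) ↦ H (u, H (v, x))`, whose top and right
edges both read `H (·, x)`: the path runs along the horizontal line at height `2s` and returns
down the right edge; for `s ≥ 1/2` the top edge is folded onto the right one and retracted. -/
noncomputable def foldPath : C(I × A, C(I, A)) :=
  ContinuousMap.curry ⟨fun q =>
    if (q.2 : ℝ) ≤ 1 / 2 then
      H (clamp (min (2 * (q.2 : ℝ)) (2 - 2 * q.1.1)), H (clamp (2 * (q.1.1 : ℝ)), q.1.2))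
    else H (clamp (min (2 * (q.1.1 : ℝ)) (2 - 2 * q.1.1) * (2 - 2 * q.2)), q.1.2), by
    have := continuous_projIcc (a := (0 : ℝ)) (b := 1) (h := zero_le_one)
    refine Continuous.if_le (by fun_prop) (by fun_prop) (by fun_prop) (by fun_prop) ?_
    rintro ⟨⟨s, x⟩, τ⟩ (hτ : (τ : ℝ) = 1 / 2)
    simp only [hτ]
    rcases le_total (s : ℝ) (1 / 2) with hs | hs
    · rw [min_eq_left (by linarith), min_eq_left (by linarith),
        projIcc_eq_one.2 (by norm_num : (1 : ℝ) ≤ 2 * (1 / 2))]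
      norm_num
    · rw [min_eq_right (by linarith), min_eq_right (by linarith),
        projIcc_eq_one.2 (by linarith : (1 : ℝ) ≤ 2 * s)]
      norm_num⟩

@[simp] theorem foldPath_apply_zero (s : I) (x : A) :
    H.foldPath (s, x) 0 = a (H (clamp (2 * (s : ℝ)), x)) := by
  simp [foldPath, min_eq_left (by linarith [s.2.2] : (0 : ℝ) ≤ 2 - 2 * s)]

@[simp] theorem foldPath_apply_one (s : I) (x : A) : H.foldPath (s, x) 1 = a x := by
  norm_num [foldPath]

theorem foldPath_zero (x : A) : H.foldPath (0, x) = H.tracePath (0, a x) := by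
  ext τ
  simp only [foldPath, tracePath, ContinuousMap.curry_apply, coe_mk]
  split_ifs with hτ
  · simp [min_eq_left (by linarith [τ.2.2] : 2 * (τ : ℝ) ≤ 2)]
  · simp [projIcc_eq_one.2 (by linarith : (1 : ℝ) ≤ 2 * τ)]

theorem foldPath_one (x : A) : H.foldPath (1, x) = .const I (a x) := by
  ext τ
  simp only [foldPath, ContinuousMap.curry_apply, coe_mk, const_apply]
  split_ifs with hτ
  · simp [min_eq_right (by linarith [τ.2.1] : (0 : ℝ) ≤ 2 * τ),
      projIcc_eq_one.2 (by norm_num : (1 : ℝ) ≤ 2)]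
  · simp

end ContinuousMap.Homotopy

section Lifting

variable {A A' B E X : Type*} [TopologicalSpace A] [TopologicalSpace A'] [TopologicalSpace B]
  [TopologicalSpace E] [TopologicalSpace X]

/-- A lifting function for `p` in the sense of Hurewicz fibrations, transporting points backwards
along paths of the base; it need only be unital up to a homotopy inside the fibres of `p`. -/
structure LiftingFunction (p : C(E, B)) where
  lift : C(Function.Pullback (fun α : C(I, B) => α 1) p, E)
  p_lift : ∀ q, p (lift q) = q.1.1 0
  unitHomotopy : C(I × E, E)
  unitHomotopy_zero : ∀ e, unitHomotopy (0, e) = lift ⟨(.const I (p e), e), rfl⟩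
  unitHomotopy_one : ∀ e, unitHomotopy (1, e) = e
  p_unitHomotopy : ∀ t e, p (unitHomotopy (t, e)) = p e

@[simps]
def pullbackFst (h : C(A, B)) (p : C(E, B)) : C(Function.Pullback h p, A) :=
  ⟨fun q => q.1.1, by fun_prop⟩

@[simps]
def pullbackSnd (h : C(A, B)) (p : C(E, B)) : C(Function.Pullback h p, E) :=
  ⟨fun q => q.1.2, by fun_prop⟩

@[simps]
def pullbackMap {h' : C(A', B)} {h : C(A, B)} (p : C(E, B)) (a : C(A', A))
    (ha : ∀ x, h (a x) = h' x) : C(Function.Pullback h' p, Function.Pullback h p) :=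
  ⟨fun q => ⟨(a q.1.1, q.1.2), (ha _).trans q.2⟩, by fun_prop⟩

def pullbackIdHomeomorph (p : C(E, B)) : Function.Pullback (ContinuousMap.id B) p ≃ₜ E where
  toFun q := q.1.2
  invFun e := ⟨(p e, e), rfl⟩
  left_inv q := Subtype.ext (Prod.ext q.2.symm rfl)
  right_inv _ := rfl
  continuous_toFun := by fun_prop
  continuous_invFun := by fun_prop

namespace LiftingFunction

section LiftMap

variable {p : C(E, B)} (Λ : LiftingFunction p)

def liftMap {h : C(A, B)} (ξ : C(X, A)) (β : C(X, C(I, B))) (ε : C(X, E))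
    (hβ₀ : ∀ x, β x 0 = h (ξ x)) (hβ₁ : ∀ x, β x 1 = p (ε x)) : C(X, Function.Pullback h p) :=
  ⟨fun x => ⟨(ξ x, Λ.lift ⟨(β x, ε x), hβ₁ x⟩), by simp [Λ.p_lift, hβ₀]⟩, by
    have := Λ.lift.continuous; fun_prop⟩

theorem liftMap_congr {h : C(A, B)} {ξ ξ' : C(X, A)} {β β' : C(X, C(I, B))} {ε : C(X, E)}
    (hξ : ξ = ξ') (hβ : β = β') {hβ₀ hβ₁ hβ₀' hβ₁'} :
    Λ.liftMap (h := h) ξ β ε hβ₀ hβ₁ = Λ.liftMap ξ' β' ε hβ₀' hβ₁' := by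
  subst hξ hβ; rfl

theorem liftMap_comp {h : C(A, B)} {Y : Type*} [TopologicalSpace Y] (ξ : C(X, A))
    (β : C(X, C(I, B))) (ε : C(X, E)) (hβ₀ : ∀ x, β x 0 = h (ξ x)) (hβ₁ : ∀ x, β x 1 = p (ε x))
    (g : C(Y, X)) :
    (Λ.liftMap ξ β ε hβ₀ hβ₁).comp g =
      Λ.liftMap (ξ.comp g) (β.comp g) (ε.comp g) (fun y => hβ₀ (g y)) (fun y => hβ₁ (g y)) :=
  rfl

theorem pullbackMap_comp_liftMap {h h' : C(A, B)} (a : C(A, A)) (ha : ∀ x, h (a x) = h' x)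
    (ξ : C(X, A)) (β : C(X, C(I, B))) (ε : C(X, E)) (hβ₀ : ∀ x, β x 0 = h' (ξ x))
    (hβ₁ : ∀ x, β x 1 = p (ε x)) :
    (pullbackMap p a ha).comp (Λ.liftMap ξ β ε hβ₀ hβ₁) =
      Λ.liftMap (a.comp ξ) β ε (fun x => (hβ₀ x).trans (ha _).symm) hβ₁ :=
  rfl

theorem liftMap_homotopic {h : C(A, B)} (ξ : C(I × X, A)) (β : C(I × X, C(I, B)))
    (ε : C(X, E)) (hβ₀ : ∀ x, β x 0 = h (ξ x)) (hβ₁ : ∀ s x, β (s, x) 1 = p (ε x)) :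
    (Λ.liftMap (ξ.curry 0) (β.curry 0) ε (fun x => hβ₀ (0, x)) (hβ₁ 0)).Homotopic
      (Λ.liftMap (ξ.curry 1) (β.curry 1) ε (fun x => hβ₀ (1, x)) (hβ₁ 1)) :=
  ⟨⟨Λ.liftMap ξ β (ε.comp .snd) hβ₀ (fun q => hβ₁ q.1 q.2), fun _ => rfl, fun _ => rfl⟩⟩

theorem liftMap_const_homotopic_id (h : C(A, B)) :
    (Λ.liftMap (pullbackFst h p) (const'.comp (h.comp (pullbackFst h p))) (pullbackSnd h p)
      (fun _ => rfl) (fun q => q.2)).Homotopic (.id _) := by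
  have := Λ.unitHomotopy.continuous
  refine ⟨⟨⟨fun q => ⟨(q.2.1.1, Λ.unitHomotopy (q.1, q.2.1.2)),
    (Λ.p_unitHomotopy _ _).symm ▸ q.2.2⟩, by fun_prop⟩, ?_, ?_⟩⟩
  · rintro ⟨⟨x, e⟩, hxe⟩
    simp only [Λ.unitHomotopy_zero]
    exact Subtype.ext (Prod.ext rfl (congrArg Λ.lift (Subtype.ext (Prod.ext
      (ContinuousMap.ext fun _ => hxe.symm) rfl))))
  · rintro ⟨⟨x, e⟩, hxe⟩
    simp [Λ.unitHomotopy_one]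

theorem liftMap_homotopic_id {h : C(A, B)} (ξ : C(I × Function.Pullback h p, A))
    (β : C(I × Function.Pullback h p, C(I, B))) (hβ₀ : ∀ x, β x 0 = h (ξ x))
    (hβ₁ : ∀ s q, β (s, q) 1 = p q.1.2) (hξ : ∀ q, ξ (1, q) = q.1.1)
    (hβ : ∀ q, β (1, q) = .const I (h q.1.1)) :
    (Λ.liftMap (ξ.curry 0) (β.curry 0) (pullbackSnd h p) (fun x => hβ₀ (0, x))
      (hβ₁ 0)).Homotopic (.id _) := by
  refine (Λ.liftMap_homotopic ξ β (pullbackSnd h p) hβ₀ hβ₁).trans ?_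
  convert Λ.liftMap_const_homotopic_id h using 1
  exact Λ.liftMap_congr (by ext q; exact hξ q) (by ext q : 1; exact hβ q)

end LiftMap

theorem isHomotopyEquiv_pullbackMap {p : C(E, B)} (Λ : LiftingFunction p) {h h' : C(A, B)}
    {a : C(A, A)} (ha : ∀ x, h (a x) = h' x) (haH : a.Homotopic (.id A)) :
    IsHomotopyEquiv (pullbackMap p a ha) := by
  obtain ⟨H⟩ := haH
  let T : C(Function.Pullback h p, Function.Pullback h' p) :=
    Λ.liftMap (pullbackFst h p) ⟨fun q => h.comp (H.tracePath (0, q.1.1)), by fun_prop⟩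
      (pullbackSnd h p) (fun q => by simp [← ha]) (fun q => by simpa using q.2)
  refine .of_homotopic_inverses (l := T) (r := T) ?_ ?_
  · have := Λ.liftMap_homotopic_id (h := h')
      (ξ := ⟨fun q => H (clamp (2 * (q.1 : ℝ)), q.2.1.1), by fun_prop⟩)
      (β := ⟨fun q => h.comp (H.foldPath (q.1, q.2.1.1)), by fun_prop⟩)
      (fun q => by simp [ha]) (fun s q => by simpa [ha] using q.2)
      (by simp [projIcc_eq_one.2 (by norm_num : (1 : ℝ) ≤ 2)])
      (fun q => by ext; simp [H.foldPath_one, ha])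
    convert this using 1
    rw [Λ.liftMap_comp]
    exact Λ.liftMap_congr (by ext; simp) (by ext q : 1; simp [H.foldPath_zero])
  · have := Λ.liftMap_homotopic_id (h := h)
      (ξ := ⟨fun q => H (q.1, q.2.1.1), by fun_prop⟩)
      (β := ⟨fun q => h.comp (H.tracePath (q.1, q.2.1.1)), by fun_prop⟩)
      (by simp) (fun s q => by simpa using q.2) (by simp)
      (fun q => by ext; simp [H.tracePath_one])
    convert this using 1
    rw [Λ.pullbackMap_comp_liftMap]
    exact Λ.liftMap_congr (by ext; simp) rfl

theorem isHomotopyEquiv_pullbackSnd_of_homotopic_id {p : C(E, B)} (Λ : LiftingFunction p)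
    {c : C(B, B)} (hc : c.Homotopic (.id B)) : IsHomotopyEquiv (pullbackSnd c p) :=
  (pullbackIdHomeomorph p).isHomotopyEquiv.comp
    (Λ.isHomotopyEquiv_pullbackMap (h := .id B) (h' := c) (fun _ => rfl) hc)

theorem isHomotopyEquiv_pullbackSnd {p : C(E, B)} (Λ : LiftingFunction p) {f : C(A, B)}
    (hf : IsHomotopyEquiv f) : IsHomotopyEquiv (pullbackSnd f p) := by
  obtain ⟨g, hgf, hfg⟩ := hf
  have hg : IsHomotopyEquiv (pullbackMap p g (h' := f.comp g) fun _ => rfl) :=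
    .of_comp_of_comp (u := pullbackMap p f (h' := (f.comp g).comp f) fun _ => rfl)
      (w := pullbackSnd f p)
      (Λ.isHomotopyEquiv_pullbackMap (a := g.comp f) (fun _ => rfl) hgf)
      (Λ.isHomotopyEquiv_pullbackSnd_of_homotopic_id hfg)
  exact hg.of_comp_right (Λ.isHomotopyEquiv_pullbackSnd_of_homotopic_id hfg)

end LiftingFunction

end Lifting

namespace Circle

open Real

theorem exp_arcsin_im {z : Circle} (hz : 0 ≤ (z : ℂ).re) : exp (arcsin (z : ℂ).im) = z := by
  have h := Complex.arg_of_re_nonneg hz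
  rw [norm_coe, div_one] at h
  rw [← h, exp_arg]

theorem abs_im_le_one (z : Circle) : |(z : ℂ).im| ≤ 1 :=
  (Complex.abs_im_le_norm z).trans z.norm_coe.le

theorem abs_im_eq_one_of_re_eq_zero {z : Circle} (hz : (z : ℂ).re = 0) : |(z : ℂ).im| = 1 := by
  have h := normSq_coe z
  rw [Complex.normSq_apply, hz, zero_mul, zero_add, ← sq, ← sq_abs] at h
  exact (pow_eq_one_iff_of_nonneg (abs_nonneg _) two_ne_zero).1 h

noncomputable def absIm : C(Circle, I) :=
  ⟨fun z => ⟨|(z : ℂ).im|, abs_nonneg _, z.abs_im_le_one⟩, by fun_prop⟩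

theorem absIm_one : absIm 1 = 0 := by
  ext; simp [absIm]

theorem absIm_of_re_eq_zero {z : Circle} (hz : (z : ℂ).re = 0) : absIm z = 1 :=
  Subtype.ext (abs_im_eq_one_of_re_eq_zero hz)

/-- The identity at time `1`; at time `0` it collapses the right half circle to `1` and wraps the
left half once around the circle. Every stage fixes `1`. -/
noncomputable def squeeze : C(I × Circle, Circle) :=
  ⟨fun q => if 0 ≤ (q.2 : ℂ).re then exp (q.1 * arcsin (q.2 : ℂ).im)
    else q.2 * exp ((1 - q.1) * arcsin (-(q.2 : ℂ).im)), by
    refine Continuous.if_le (by fun_prop) (by fun_prop) continuous_const (by fun_prop) ?_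
    rintro ⟨t, z⟩ (hz : 0 = (z : ℂ).re)
    dsimp only
    rw [arcsin_neg]
    calc exp (t * arcsin (z : ℂ).im)
        = exp (arcsin (z : ℂ).im) * exp ((1 - t) * -arcsin (z : ℂ).im) := by
          rw [← exp_add]; ring_nf
      _ = _ := by rw [exp_arcsin_im hz.le]⟩

theorem squeeze_apply_one (t : I) : squeeze (t, 1) = 1 := by
  simp [squeeze]

theorem squeeze_one (z : Circle) : squeeze (1, z) = z := by
  by_cases hz : 0 ≤ (z : ℂ).re <;> simp [squeeze, hz, exp_arcsin_im]

theorem squeeze_zero_of_re_nonneg {z : Circle} (hz : 0 ≤ (z : ℂ).re) : squeeze (0, z) = 1 := by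
  simp [squeeze, hz]

end Circle

@[simps]
noncomputable def loopEv (M : Type*) [TopologicalSpace M] : C(C(Circle, M), M) :=
  ⟨fun γ => γ 1, continuous_eval_const 1⟩

section Whisker

variable {M : Type*} [TopologicalSpace M]

/-- The loop running along `α`, around `γ` and back along `α`: the right half circle is the
whisker `α`, parametrised by `|Im z|`. -/
noncomputable def whisker :
    C(Function.Pullback (fun α : C(I, M) => α 1) (loopEv M), C(Circle, M)) :=
  ContinuousMap.curry ⟨fun q => if 0 ≤ (q.2 : ℂ).re
      then q.1.1.1 (Circle.absIm q.2) else q.1.1.2 (Circle.squeeze (0, q.2)), by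
    refine Continuous.if_le (by fun_prop) (by fun_prop) continuous_const (by fun_prop) ?_
    rintro ⟨⟨⟨α, γ⟩, hαγ⟩, z⟩ (hz : 0 = (z : ℂ).re)
    simpa [Circle.absIm_of_re_eq_zero hz.symm, Circle.squeeze_zero_of_re_nonneg hz.le] using hαγ⟩

theorem whisker_apply (q : Function.Pullback (fun α : C(I, M) => α 1) (loopEv M)) (z : Circle) :
    whisker q z = if 0 ≤ (z : ℂ).re then q.1.1 (Circle.absIm z)
      else q.1.2 (Circle.squeeze (0, z)) :=
  rfl

end Whisker

noncomputable def loopLiftingFunction (M : Type*) [TopologicalSpace M] :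
    LiftingFunction (loopEv M) where
  lift := whisker
  p_lift q := by simp [whisker_apply, Circle.absIm_one]
  unitHomotopy := ContinuousMap.curry ⟨fun q => q.1.2 (Circle.squeeze (q.1.1, q.2)), by fun_prop⟩
  unitHomotopy_zero γ := by
    ext z
    rw [whisker_apply]
    split_ifs with hz
    · simp [Circle.squeeze_zero_of_re_nonneg hz]
    · rfl
  unitHomotopy_one γ := by ext z; simp [Circle.squeeze_one]
  p_unitHomotopy t γ := by simp [Circle.squeeze_apply_one]

/-- Let `f : M₁ → M₂` be a homotopy equivalence of
topological spaces.  Then (a) the projection `f*LM₂ → LM₂`, `(x,γ) ↦ γ`, is a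
homotopy equivalence; and (b) the map `f̃ : LM₁ → f*LM₂`,
`f̃ γ = (γ 1, f ∘ γ)`, is a homotopy equivalence.  In particular
`Lf = (projection) ∘ f̃`. -/
theorem loop_pullback_homotopy_equivalences {M₁ M₂ : Type*}
    [TopologicalSpace M₁] [TopologicalSpace M₂] (f : C(M₁, M₂))
    (hf : IsHomotopyEquiv f) :
    IsHomotopyEquiv (pullbackProj f) ∧
    IsHomotopyEquiv (loopPullbackMap f) ∧
    loopMap f = (pullbackProj f).comp (loopPullbackMap f) := by
  have hproj : IsHomotopyEquiv (pullbackProj f) :=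
    (loopLiftingFunction M₂).isHomotopyEquiv_pullbackSnd hf
  exact ⟨hproj, hproj.of_comp_left hf.loopMap, rfl⟩
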